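/- arXiv:0809.2479 — 3 statements merged into one kernel-verified Lean document; each statement's English description precedes it below -/
import Mathlib

section
/- Let k be a complete non-archimedean valued field and let f, g, h ∈ k[[T]] be formal power series with nonzero constant terms such that f = g·h. Suppose the radius of convergence of g equals the radius of convergence of its multiplicative inverse g⁻¹, the radius of convergence of h equals that of h⁻¹, and the radii of convergence of g and h are distinct. Then the radius of convergence of f equals the minimum of the radii of convergence of g and h. -/
/-!
The ultrametric inequality for the coefficients of a product gives
`min (R a) (R b) ≤ R (a * b)`. When `R g < R h` this yields `R g ≤ R (g * h)`; applied to
`g = (g * h) * h⁻¹`, with `R h⁻¹ = R h > R g`, it gives `min (R (g * h)) (R h) ≤ R g`, hence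
`R (g * h) ≤ R g`.
-/

open Filter PowerSeries

/-- Radius of convergence of a formal power series over a normed field:
`liminf ‖aₙ‖⁻¹ ^ (1/n)`, computed in `ℝ≥0∞` (so `‖0‖⁻¹ = ∞`). -/
noncomputable def radiusOfConv {k : Type*} [NormedField k] (f : PowerSeries k) : ENNReal :=
  Filter.liminf (fun n : ℕ => ((‖PowerSeries.coeff n f‖₊ : ENNReal))⁻¹ ^ (1 / (n : ℝ)))
    Filter.atTop

open scoped NNReal ENNReal Topology

theorem ENNReal.coe_le_inv_rpow_one_div_iff {x r : ℝ≥0} {n : ℕ} (hn : 0 < n) :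
    (r : ℝ≥0∞) ≤ (x : ℝ≥0∞)⁻¹ ^ (1 / (n : ℝ)) ↔ x * r ^ n ≤ 1 := by
  rw [one_div, ENNReal.le_rpow_inv_iff (by positivity), ENNReal.rpow_natCast,
    ENNReal.le_inv_iff_mul_le, ← ENNReal.coe_pow, ← ENNReal.coe_mul, ENNReal.coe_le_one_iff,
    mul_comm]

section RadiusOfConv

variable {k : Type*} [NormedField k]

theorem eventually_nnnorm_coeff_mul_pow_le_one {a : PowerSeries k} {r : ℝ≥0}
    (hr : (r : ℝ≥0∞) < radiusOfConv a) : ∀ᶠ n in atTop, ‖coeff n a‖₊ * r ^ n ≤ 1 := by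
  filter_upwards [eventually_lt_of_lt_liminf hr, eventually_gt_atTop 0] with n hlt hn
  exact (ENNReal.coe_le_inv_rpow_one_div_iff hn).1 hlt.le

theorem exists_nnnorm_coeff_mul_pow_le {a : PowerSeries k} {r : ℝ≥0}
    (hr : (r : ℝ≥0∞) < radiusOfConv a) : ∃ C, ∀ n, ‖coeff n a‖₊ * r ^ n ≤ C := by
  obtain ⟨C, hC⟩ :=
    (isBoundedUnder_of_eventually_le (eventually_nnnorm_coeff_mul_pow_le_one hr)).bddAbove_range
  exact ⟨C, fun n => hC (Set.mem_range_self n)⟩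

theorem le_radiusOfConv_of_nnnorm_coeff_mul_pow_le {a : PowerSeries k} {r C : ℝ≥0}
    (h : ∀ n, ‖coeff n a‖₊ * r ^ n ≤ C) : (r : ℝ≥0∞) ≤ radiusOfConv a := by
  refine ENNReal.le_of_forall_nnreal_lt fun s hs => ?_
  have hsr : s < r := ENNReal.coe_lt_coe.1 hs
  have hr : r ≠ 0 := (pos_of_gt hsr).ne'
  -- `‖aₙ‖ sⁿ ≤ C (s / r)ⁿ`, which tends to `0`
  have hdecay : Tendsto (fun n => C * (s / r) ^ n) atTop (𝓝 0) := by
    simpa using (NNReal.tendsto_pow_atTop_nhds_zero_of_lt_one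
      ((div_lt_one (pos_of_gt hsr)).2 hsr)).const_mul C
  refine le_liminf_of_le (by isBoundedDefault) ?_
  filter_upwards [hdecay.eventually (gt_mem_nhds one_pos), eventually_gt_atTop 0] with n hsmall hn
  rw [ENNReal.coe_le_inv_rpow_one_div_iff hn]
  calc ‖coeff n a‖₊ * s ^ n = ‖coeff n a‖₊ * r ^ n * (s / r) ^ n := by
        rw [div_pow, mul_assoc, mul_div_cancel₀ _ (pow_ne_zero n hr)]
    _ ≤ C * (s / r) ^ n := by gcongr; exact h n
    _ ≤ 1 := hsmall.le

variable [IsUltrametricDist k]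

theorem nnnorm_coeff_mul_mul_pow_le {a b : PowerSeries k} {r Ca Cb : ℝ≥0}
    (ha : ∀ n, ‖coeff n a‖₊ * r ^ n ≤ Ca) (hb : ∀ n, ‖coeff n b‖₊ * r ^ n ≤ Cb) (n : ℕ) :
    ‖coeff n (a * b)‖₊ * r ^ n ≤ Ca * Cb := by
  rw [coeff_mul]
  obtain ⟨⟨i, j⟩, hij, hle⟩ := IsUltrametricDist.exists_norm_finsetSum_le_of_nonempty
    (⟨(n, 0), by simp⟩ : (Finset.HasAntidiagonal.antidiagonal n).Nonempty)
    fun p => coeff p.1 a * coeff p.2 b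
  rw [Finset.HasAntidiagonal.mem_antidiagonal] at hij
  calc _ ≤ ‖coeff i a * coeff j b‖₊ * r ^ n := by gcongr; exact_mod_cast hle
    _ = (‖coeff i a‖₊ * r ^ i) * (‖coeff j b‖₊ * r ^ j) := by
        rw [← hij, nnnorm_mul, pow_add]; ring
    _ ≤ Ca * Cb := mul_le_mul' (ha i) (hb j)

theorem min_radiusOfConv_le_radiusOfConv_mul (a b : PowerSeries k) :
    min (radiusOfConv a) (radiusOfConv b) ≤ radiusOfConv (a * b) := by
  refine ENNReal.le_of_forall_nnreal_lt fun r hr => ?_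
  obtain ⟨Ca, ha⟩ := exists_nnnorm_coeff_mul_pow_le (hr.trans_le (min_le_left _ _))
  obtain ⟨Cb, hb⟩ := exists_nnnorm_coeff_mul_pow_le (hr.trans_le (min_le_right _ _))
  exact le_radiusOfConv_of_nnnorm_coeff_mul_pow_le (nnnorm_coeff_mul_mul_pow_le ha hb)

theorem radiusOfConv_mul_eq_left_of_lt {g h : PowerSeries k} (hh0 : constantCoeff h ≠ 0)
    (hh : radiusOfConv h = radiusOfConv h⁻¹) (hlt : radiusOfConv g < radiusOfConv h) :
    radiusOfConv (g * h) = radiusOfConv g := by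
  refine le_antisymm ?_ (by simpa [min_eq_left hlt.le] using
    min_radiusOfConv_le_radiusOfConv_mul g h)
  have hg : g * h * h⁻¹ = g := by rw [mul_assoc, PowerSeries.mul_inv_cancel h hh0, mul_one]
  have hle := min_radiusOfConv_le_radiusOfConv_mul (g * h) h⁻¹
  rw [hg, ← hh, min_le_iff] at hle
  exact hle.resolve_right hlt.not_ge

end RadiusOfConv

theorem radius_of_product_of_distinct_radii_general
    {k : Type*} [NormedField k] [IsUltrametricDist k]
    (f g h : PowerSeries k)
    (hg0 : PowerSeries.constantCoeff g ≠ 0)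
    (hh0 : PowerSeries.constantCoeff h ≠ 0)
    (hfgh : f = g * h)
    (hg : radiusOfConv g = radiusOfConv g⁻¹)
    (hh : radiusOfConv h = radiusOfConv h⁻¹)
    (hne : radiusOfConv g ≠ radiusOfConv h) :
    radiusOfConv f = min (radiusOfConv g) (radiusOfConv h) := by
  subst hfgh
  rcases hne.lt_or_gt with hlt | hlt
  · rw [min_eq_left hlt.le, radiusOfConv_mul_eq_left_of_lt hh0 hh hlt]
  · rw [min_eq_right hlt.le, mul_comm, radiusOfConv_mul_eq_left_of_lt hg0 hg hlt]

theorem radius_of_product_of_distinct_radii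
    {k : Type*} [NormedField k] [CompleteSpace k] [IsUltrametricDist k]
    (f g h : PowerSeries k)
    (hg0 : PowerSeries.constantCoeff g ≠ 0)
    (hh0 : PowerSeries.constantCoeff h ≠ 0)
    (hfgh : f = g * h)
    (hg : radiusOfConv g = radiusOfConv g⁻¹)
    (hh : radiusOfConv h = radiusOfConv h⁻¹)
    (hne : radiusOfConv g ≠ radiusOfConv h) :
    radiusOfConv f = min (radiusOfConv g) (radiusOfConv h) :=
  radius_of_product_of_distinct_radii_general f g h hg0 hh0 hfgh hg hh hne
end

section
/- Let p be a prime. The Artin–Hasse exponential series exp(T + T^p/p + T^{p²}/p² + ⋯) = exp(∑_{i≥0} T^{pⁱ}/pⁱ), computed as a formal power series over ℚ, has all its coefficients in ℤ_{(p)} (equivalently, p-adically integral coefficients). -/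
/-!
Dwork's argument. For the Artin–Hasse series `F`, the functional equation of `exp` gives
`F(T)^p = F(T^p) · exp(pT)`, because `p ∑ T^{pⁱ}/pⁱ - ∑ T^{pⁱ⁺¹}/pⁱ = pT`, and the coefficients
`pˡ/l!` of `exp(pT)` are divisible by `p` for `l ≥ 1`. Suppose the coefficients of `F` below
degree `n` are `p`-integral, and let `P` be the truncation of `F` below degree `n`. The
coefficient of `Tⁿ` in `F^p` is `p·aₙ + [Tⁿ]P^p`, and modulo `p` both `[Tⁿ]P^p` (by Frobenius)
and `[Tⁿ]F(T^p)exp(pT)` are congruent to `[Tⁿ]P(T^p)`. Hence `p·aₙ ≡ 0 mod p`.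
-/

open PowerSeries
open scoped Classical

/-- The inner series `∑_{i≥0} T^{pⁱ}/pⁱ ∈ ℚ[[T]]`: the coefficient of `Tⁿ` is `1/n`
if `n` is a power of `p` (note `1/pⁱ = 1/n` when `n = pⁱ`), and `0` otherwise. -/
noncomputable def artinHasseInner (p : ℕ) : PowerSeries ℚ :=
  PowerSeries.mk fun n => if ∃ i : ℕ, n = p ^ i then 1 / (n : ℚ) else 0

/-- The Artin–Hasse exponential `exp(∑_{i≥0} T^{pⁱ}/pⁱ) ∈ ℚ[[T]]`, where the
composition with `exp(X) = ∑ Xᵐ/m!` is computed coefficientwise (the coefficient of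
`Tⁿ` only receives contributions from `m ≤ n` since the inner series has zero
constant term). -/
noncomputable def artinHasse (p : ℕ) : PowerSeries ℚ :=
  PowerSeries.mk fun n =>
    ∑ m ∈ Finset.range (n + 1),
      (1 / (m.factorial : ℚ)) * PowerSeries.coeff n ((artinHasseInner p) ^ m)

theorem add_pow_eq_of_sq_eq_zero {A : Type*} [CommRing A] {x y : A} (hy : y ^ 2 = 0) (k : ℕ) :
    (x + y) ^ k = x ^ k + k * x ^ (k - 1) * y := by
  simpa [Polynomial.derivative_X_pow] using
    Polynomial.eval_add_of_sq_eq_zero (Polynomial.X ^ k) x y hy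

namespace PowerSeries

section Truncation

variable {R : Type*} [CommRing R]

theorem mk_span_X_pow_eq_iff {N : ℕ} {f g : R⟦X⟧} :
    Ideal.Quotient.mk (Ideal.span {X ^ N}) f = Ideal.Quotient.mk (Ideal.span {X ^ N}) g ↔
      ∀ n < N, coeff n f = coeff n g := by
  simp only [Ideal.Quotient.eq, Ideal.mem_span_singleton, X_pow_dvd_iff, map_sub, sub_eq_zero]

theorem mk_span_X_pow_pow_eq_zero {N : ℕ} {f : R⟦X⟧} (hf : constantCoeff f = 0) :
    Ideal.Quotient.mk (Ideal.span {X ^ N}) f ^ N = 0 := by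
  rw [← map_pow, Ideal.Quotient.eq_zero_iff_mem, Ideal.mem_span_singleton]
  exact pow_dvd_pow_of_dvd (X_dvd_iff.mpr hf) N

theorem coeff_pow_eq_mul_coeff_add_coeff_trunc_pow {F : R⟦X⟧} (hF : constantCoeff F = 1)
    {n : ℕ} (hn : n ≠ 0) (k : ℕ) :
    coeff n (F ^ k) = k * coeff n F + coeff n ((trunc n F : R⟦X⟧) ^ k) := by
  set P : R⟦X⟧ := ↑(trunc n F)
  set S : R⟦X⟧ := mk fun i ↦ coeff (i + n) F
  have hP : constantCoeff P = 1 := by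
    rw [← coeff_zero_eq_constantCoeff_apply, Polynomial.coeff_coe, coeff_trunc,
      if_pos (Nat.pos_of_ne_zero hn), coeff_zero_eq_constantCoeff_apply, hF]
  have hS : constantCoeff S = coeff n F := by
    rw [← coeff_zero_eq_constantCoeff_apply, coeff_mk, zero_add]
  have hsq : Ideal.Quotient.mk (Ideal.span {X ^ (n + 1)}) (X ^ n * S) ^ 2 = 0 := by
    rw [← map_pow, Ideal.Quotient.eq_zero_iff_mem, Ideal.mem_span_singleton, mul_pow, ← pow_mul]
    exact (pow_dvd_pow X (by omega)).mul_right _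
  have hmk : Ideal.Quotient.mk (Ideal.span {X ^ (n + 1)}) (F ^ k) =
      Ideal.Quotient.mk _ (P ^ k + X ^ n * ((k : R⟦X⟧) * P ^ (k - 1) * S)) := by
    have hsplit : F = P + X ^ n * S := by rw [add_comm]; exact eq_X_pow_mul_shift_add_trunc n F
    rw [hsplit, map_pow, map_add, add_pow_eq_of_sq_eq_zero hsq]
    simp only [map_add, map_mul, map_pow, map_natCast]
    ring
  rw [mk_span_X_pow_eq_iff.mp hmk n n.lt_succ_self, map_add, coeff_X_pow_mul', if_pos le_rfl,
    Nat.sub_self, coeff_zero_eq_constantCoeff_apply]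
  simp [hP, hS, add_comm]

end Truncation

section ExpOf

variable {A : Type*} [CommRing A] [Algebra ℚ A]

/-- `exp ∘ f`, computed coefficientwise; it is the composite only when `constantCoeff f = 0`
(otherwise the truncated sums are junk). -/
noncomputable def expOf (f : A⟦X⟧) : A⟦X⟧ :=
  mk fun n ↦ ∑ m ∈ Finset.range (n + 1), (1 / (m.factorial : ℚ)) • coeff n (f ^ m)

theorem constantCoeff_expOf (f : A⟦X⟧) : constantCoeff (expOf f) = 1 := by
  rw [← coeff_zero_eq_constantCoeff_apply, expOf, coeff_mk]
  simp

theorem coeff_expOf_eq_sum {f : A⟦X⟧} (hf : constantCoeff f = 0) {n N : ℕ} (hN : n < N) :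
    coeff n (expOf f) = ∑ m ∈ Finset.range N, (1 / (m.factorial : ℚ)) • coeff n (f ^ m) := by
  rw [expOf, coeff_mk]
  refine Finset.sum_subset (Finset.range_subset_range.mpr hN) fun m _ hm ↦ ?_
  have hnm : n < m := by simpa using hm
  rw [X_pow_dvd_iff.mp (pow_dvd_pow_of_dvd (X_dvd_iff.mpr hf) m) n hnm, smul_zero]

-- Modulo `X ^ N` the series `f` is nilpotent, so the functional equation of `expOf` can be
-- read off from `IsNilpotent.exp_add_of_commute`.
theorem mk_span_X_pow_expOf {f : A⟦X⟧} (hf : constantCoeff f = 0) (N : ℕ) :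
    Ideal.Quotient.mk (Ideal.span {X ^ N}) (expOf f) =
      IsNilpotent.exp (Ideal.Quotient.mk (Ideal.span {X ^ N}) f) := by
  rw [IsNilpotent.exp_eq_sum (mk_span_X_pow_pow_eq_zero hf), ← Ideal.Quotient.mkₐ_eq_mk ℚ]
  simp only [← map_pow, ← map_smul, ← map_sum]
  rw [Ideal.Quotient.mkₐ_eq_mk, mk_span_X_pow_eq_iff]
  intro n hn
  rw [coeff_expOf_eq_sum hf hn, map_sum]
  simp only [one_div, coeff_smul]

theorem expOf_add {f g : A⟦X⟧} (hf : constantCoeff f = 0) (hg : constantCoeff g = 0) :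
    expOf (f + g) = expOf f * expOf g := by
  ext n
  refine mk_span_X_pow_eq_iff.mp ?_ n n.lt_succ_self
  rw [map_mul, mk_span_X_pow_expOf (by rw [map_add, hf, hg, add_zero]), mk_span_X_pow_expOf hf,
    mk_span_X_pow_expOf hg, map_add]
  exact IsNilpotent.exp_add_of_commute (Commute.all _ _) ⟨_, mk_span_X_pow_pow_eq_zero hf⟩
    ⟨_, mk_span_X_pow_pow_eq_zero hg⟩

theorem expOf_zero : expOf (0 : A⟦X⟧) = 1 := by
  ext n
  refine mk_span_X_pow_eq_iff.mp ?_ n n.lt_succ_self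
  rw [mk_span_X_pow_expOf (map_zero _), map_zero, IsNilpotent.exp_zero, map_one]

theorem expOf_nsmul {f : A⟦X⟧} (hf : constantCoeff f = 0) (k : ℕ) :
    expOf (k • f) = expOf f ^ k := by
  induction k with
  | zero => rw [zero_smul, pow_zero, expOf_zero]
  | succ k ih => rw [succ_nsmul, expOf_add (by rw [map_nsmul, hf, nsmul_zero]) hf, ih, pow_succ]

theorem expOf_expand {p : ℕ} (hp : p ≠ 0) {f : A⟦X⟧} (hf : constantCoeff f = 0) :
    expOf (expand p hp f) = expand p hp (expOf f) := by
  ext n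
  rw [coeff_expand, expOf, coeff_mk]
  simp only [← map_pow, coeff_expand]
  split_ifs
  · exact (coeff_expOf_eq_sum hf (Nat.lt_succ_of_le (Nat.div_le_self n p))).symm
  · simp

theorem coeff_expOf_smul_X (c : A) (n : ℕ) :
    coeff n (expOf (c • X)) = (1 / (n.factorial : ℚ)) • c ^ n := by
  rw [expOf, coeff_mk, Finset.sum_eq_single_of_mem n (Finset.self_mem_range_succ n)]
  · simp [smul_pow, coeff_X_pow]
  · intro m _ hm
    simp [smul_pow, coeff_X_pow, Ne.symm hm]

theorem map_expOf {B : Type*} [CommRing B] [Algebra ℚ B] (φ : A →+* B) (f : A⟦X⟧) :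
    map φ (expOf f) = expOf (map φ f) := by
  ext n
  simp only [expOf, coeff_map, coeff_mk, map_sum, map_rat_smul, ← map_pow]

end ExpOf

theorem norm_coeff_mul_sub_coeff_le {R : Type*} [NormedCommRing R] [IsUltrametricDist R]
    {G E : R⟦X⟧} {n : ℕ} {r : ℝ} (hG : ∀ m < n, ‖coeff m G‖ ≤ 1)
    (hE₀ : constantCoeff E = 1) (hE : ∀ l ≠ 0, ‖coeff l E‖ ≤ r) :
    ‖coeff n (G * E) - coeff n G‖ ≤ r := by
  have hr : 0 ≤ r := (norm_nonneg _).trans (hE 1 one_ne_zero)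
  rw [← mul_one (coeff n G), ← hE₀, ← coeff_zero_eq_constantCoeff_apply, coeff_mul,
    ← Finset.sum_erase_add _ _ (show (n, 0) ∈ Finset.HasAntidiagonal.antidiagonal n by simp),
    add_sub_cancel_right]
  refine IsUltrametricDist.norm_sum_le_of_forall_le_of_nonneg hr fun ⟨i, j⟩ hij ↦ ?_
  obtain ⟨hne, hij⟩ := Finset.mem_erase.mp hij
  rw [Finset.HasAntidiagonal.mem_antidiagonal] at hij
  have hj : j ≠ 0 := by rintro rfl; exact hne (by simp_all)
  calc ‖coeff i G * coeff j E‖ ≤ ‖coeff i G‖ * ‖coeff j E‖ := norm_mul_le _ _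
    _ ≤ 1 * r := mul_le_mul (hG i (by omega)) (hE j hj) (norm_nonneg _) zero_le_one
    _ = r := one_mul r

end PowerSeries

theorem artinHasse_eq_expOf (p : ℕ) : artinHasse p = expOf (artinHasseInner p) := rfl

theorem constantCoeff_artinHasseInner (p : ℕ) : constantCoeff (artinHasseInner p) = 0 := by
  rw [← coeff_zero_eq_constantCoeff_apply, artinHasseInner, coeff_mk]
  split <;> simp

theorem smul_artinHasseInner {p : ℕ} (hp : p.Prime) :
    (p : ℚ) • artinHasseInner p = expand p hp.ne_zero (artinHasseInner p) + (p : ℚ) • X := by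
  ext n
  simp only [map_add, map_smul, smul_eq_mul, coeff_expand, artinHasseInner, coeff_mk, coeff_X]
  by_cases hpow : ∃ i, n = p ^ i
  · obtain ⟨i, rfl⟩ := hpow
    cases i with
    | zero =>
      rw [pow_zero, if_pos ⟨0, (pow_zero p).symm⟩, if_neg hp.not_dvd_one, if_pos rfl]
      simp
    | succ i =>
      have hne : p ^ (i + 1) ≠ 1 := (Nat.one_lt_pow i.succ_ne_zero hp.one_lt).ne'
      have hdiv : p ^ (i + 1) / p = p ^ i := by rw [pow_succ, Nat.mul_div_cancel _ hp.pos]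
      rw [if_pos ⟨i + 1, rfl⟩, if_pos (dvd_pow_self p i.succ_ne_zero), hdiv, if_pos ⟨i, rfl⟩,
        if_neg hne]
      have hp0 : (p : ℚ) ≠ 0 := by exact_mod_cast hp.ne_zero
      push_cast
      field_simp
      ring
  · have hn1 : n ≠ 1 := fun h ↦ hpow ⟨0, h⟩
    rw [if_neg hpow, if_neg hn1]
    split_ifs with hd h
    · obtain ⟨i, hi⟩ := h
      exact absurd ⟨i + 1, by rw [pow_succ', ← hi, Nat.mul_div_cancel' hd]⟩ hpow
    all_goals simp

theorem artinHasse_pow_prime {p : ℕ} (hp : p.Prime) :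
    artinHasse p ^ p = expand p hp.ne_zero (artinHasse p) * expOf ((p : ℚ) • X) := by
  have h0 := constantCoeff_artinHasseInner p
  rw [artinHasse_eq_expOf, ← expOf_nsmul h0, ← Nat.cast_smul_eq_nsmul ℚ, smul_artinHasseInner hp,
    expOf_add (by rw [constantCoeff_expand, h0]) (by simp), expOf_expand hp.ne_zero h0]

section Padic

variable {p : ℕ} [hp : Fact p.Prime]

theorem padicNorm_prime_pow_div_factorial_le {l : ℕ} (hl : l ≠ 0) :
    padicNorm p ((p : ℚ) ^ l / l.factorial) ≤ (p : ℚ)⁻¹ := by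
  have hp0 : (p : ℚ) ≠ 0 := by exact_mod_cast hp.out.ne_zero
  have hfac : (l.factorial : ℚ) ≠ 0 := by positivity
  rw [padicNorm.eq_zpow_of_nonzero (div_ne_zero (pow_ne_zero _ hp0) hfac),
    padicValRat.div (pow_ne_zero _ hp0) hfac, padicValRat.pow,
    padicValRat.self hp.out.one_lt, padicValRat.of_nat, ← zpow_neg_one]
  apply zpow_le_zpow_right₀ (by exact_mod_cast hp.out.one_lt.le)
  have := padicValNat_factorial_lt_of_ne_zero p hl
  omega

theorem PadicInt.dvd_coeff_pow_sub_coeff_expand (Q : Polynomial ℤ_[p]) (n : ℕ) :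
    (p : ℤ_[p]) ∣ (Q ^ p).coeff n - (Polynomial.expand ℤ_[p] p Q).coeff n := by
  rw [← Ideal.mem_span_singleton, ← PadicInt.maximalIdeal_eq_span_p, ← PadicInt.ker_toZMod,
    RingHom.mem_ker, ← Polynomial.coeff_sub, ← Polynomial.coeff_map, Polynomial.map_sub,
    Polynomial.map_pow, Polynomial.map_expand, ZMod.expand_card, sub_self, Polynomial.coeff_zero]

theorem Padic.norm_coeff_pow_sub_coeff_expand_le {P : Polynomial ℚ_[p]}
    (hP : ∀ m, ‖P.coeff m‖ ≤ 1) (n : ℕ) :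
    ‖(P ^ p).coeff n - (Polynomial.expand ℚ_[p] p P).coeff n‖ ≤ (p : ℝ)⁻¹ := by
  obtain ⟨Q, rfl⟩ := (Polynomial.mem_lifts (f := (PadicInt.Coe.ringHom : ℤ_[p] →+* ℚ_[p])) P).mp
    ((Polynomial.lifts_iff_coeff_lifts P).mpr fun m ↦ ⟨⟨_, hP m⟩, rfl⟩)
  obtain ⟨d, hd⟩ := PadicInt.dvd_coeff_pow_sub_coeff_expand Q n
  rw [← Polynomial.map_pow, ← Polynomial.map_expand, Polynomial.coeff_map, Polynomial.coeff_map,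
    ← map_sub, hd, map_mul, map_natCast, norm_mul, Padic.norm_p]
  exact mul_le_of_le_one_right (by positivity) d.norm_le_one

theorem norm_coeff_le_one_of_pow_eq_expand_mul {F E : ℚ_[p]⟦X⟧} (hF : constantCoeff F = 1)
    (hE₀ : constantCoeff E = 1) (hE : ∀ l ≠ 0, ‖coeff l E‖ ≤ (p : ℝ)⁻¹)
    (hFE : F ^ p = expand p hp.out.ne_zero F * E) (n : ℕ) : ‖coeff n F‖ ≤ 1 := by
  induction n using Nat.strong_induction_on with
  | _ n ih =>
  rcases eq_or_ne n 0 with rfl | hn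
  · simp [hF]
  set P := trunc n F
  have hP : ∀ m, ‖P.coeff m‖ ≤ 1 := fun m ↦ by
    rw [coeff_trunc]
    split_ifs with h
    exacts [ih m h, by simp]
  have hG : ∀ m < n, ‖coeff m (expand p hp.out.ne_zero F)‖ ≤ 1 := fun m hm ↦ by
    rw [coeff_expand]
    split_ifs
    exacts [ih _ ((Nat.div_le_self m p).trans_lt hm), by simp]
  have hPF : (Polynomial.expand ℚ_[p] p P).coeff n = coeff n (expand p hp.out.ne_zero F) := by
    rw [coeff_expand, Polynomial.coeff_expand hp.out.pos, coeff_trunc,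
      if_pos (Nat.div_lt_self (Nat.pos_of_ne_zero hn) hp.out.one_lt)]
  have key : (p : ℚ_[p]) * coeff n F =
      (coeff n (expand p hp.out.ne_zero F * E) - coeff n (expand p hp.out.ne_zero F)) +
        ((Polynomial.expand ℚ_[p] p P).coeff n - (P ^ p).coeff n) := by
    rw [← hFE, coeff_pow_eq_mul_coeff_add_coeff_trunc_pow hF hn, hPF, ← Polynomial.coe_pow,
      Polynomial.coeff_coe]
    ring
  have hkey : ‖(p : ℚ_[p]) * coeff n F‖ ≤ (p : ℝ)⁻¹ := by
    rw [key]
    refine (IsUltrametricDist.norm_add_le_max _ _).trans (max_le ?_ ?_)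
    · exact PowerSeries.norm_coeff_mul_sub_coeff_le hG hE₀ hE
    · exact (norm_sub_rev _ _).le.trans (Padic.norm_coeff_pow_sub_coeff_expand_le hP n)
  rw [norm_mul, Padic.norm_p] at hkey
  exact le_of_mul_le_mul_left (by simpa using hkey) (inv_pos.mpr (Nat.cast_pos.mpr hp.out.pos))

end Padic

/-- The coefficients of the Artin–Hasse exponential are `p`-adically integral,
i.e. lie in `ℤ_{(p)} ⊆ ℚ`. -/
theorem artinHasse_coeff_padic_integral {p : ℕ} (hp : p.Prime) (n : ℕ) :
    padicNorm p (PowerSeries.coeff n (artinHasse p)) ≤ 1 := by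
  have : Fact p.Prime := ⟨hp⟩
  set φ := Rat.castHom ℚ_[p]
  have hE : ∀ l ≠ 0, ‖coeff l (map φ (expOf ((p : ℚ) • X)))‖ ≤ (p : ℝ)⁻¹ := fun l hl ↦ by
    rw [coeff_map, coeff_expOf_smul_X, smul_eq_mul, one_div_mul_eq_div, Rat.coe_castHom,
      Padic.eq_padicNorm]
    have h := (Rat.cast_le (K := ℝ)).mpr (padicNorm_prime_pow_div_factorial_le (p := p) hl)
    rwa [Rat.cast_inv, Rat.cast_natCast] at h
  have h := norm_coeff_le_one_of_pow_eq_expand_mul (F := map φ (artinHasse p))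
    (by rw [artinHasse_eq_expOf, map_expOf, constantCoeff_expOf])
    (by rw [map_expOf, constantCoeff_expOf]) hE
    (by rw [← map_pow, artinHasse_pow_prime hp, map_mul, map_expand]) n
  rw [coeff_map, Rat.coe_castHom, Padic.eq_padicNorm] at h
  exact_mod_cast h
end

section
/- Let p be an odd prime and K a complete algebraically closed non-archimedean extension of ℚ_p with |p| = p^{-1}. Let b ∈ K satisfy |b| = 1 and |1 + b^p| = p^{-1+1/p}. Then |1 + b| = p^{-(p-1)/p²}. -/
/-!
By the binomial theorem `(1 + b)^p = 1 + b^p + p·s` with `‖s‖ ≤ 1`, so `(1 + b)^p` differs from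
`1 + b^p` by at most `p⁻¹ < p^(-1 + 1/p)`. In an ultrametric field this forces
`‖1 + b‖^p = ‖1 + b^p‖ = p^(-(p - 1)/p)`, and taking `p`-th roots gives the claim.
-/

open Finset

namespace IsUltrametricDist

theorem norm_eq_of_norm_sub_lt_right {E : Type*} [SeminormedAddCommGroup E] [IsUltrametricDist E]
    {x y : E} (h : ‖x - y‖ < ‖y‖) : ‖x‖ = ‖y‖ := by
  rw [← sub_add_cancel x y, add_comm, norm_add_eq_max_of_norm_ne_norm h.ne', max_eq_left h.le]

variable {R : Type*} [NormedCommRing R] [NormOneClass R] [IsUltrametricDist R]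

theorem norm_add_pow_prime_sub_le {p : ℕ} (hp : p.Prime) {x y : R} (hx : ‖x‖ ≤ 1)
    (hy : ‖y‖ ≤ 1) : ‖(x + y) ^ p - (x ^ p + y ^ p)‖ ≤ ‖(p : R)‖ := by
  rw [add_pow_prime_eq' hp, add_sub_cancel_left]
  refine (norm_mul_le _ _).trans (mul_le_of_le_one_right (norm_nonneg _) ?_)
  refine norm_sum_le_of_forall_le_of_nonneg zero_le_one fun k _ => ?_
  have hxk : ‖x ^ k‖ ≤ 1 := (_root_.norm_pow_le x k).trans (pow_le_one₀ (norm_nonneg x) hx)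
  have hyk : ‖y ^ (p - k)‖ ≤ 1 := (_root_.norm_pow_le y _).trans (pow_le_one₀ (norm_nonneg y) hy)
  calc ‖x ^ k * y ^ (p - k) * ((p.choose k / p : ℕ) : R)‖
      ≤ ‖x ^ k‖ * ‖y ^ (p - k)‖ * ‖((p.choose k / p : ℕ) : R)‖ :=
        (norm_mul_le _ _).trans (mul_le_mul_of_nonneg_right (norm_mul_le _ _) (norm_nonneg _))
    _ ≤ 1 * 1 * 1 := by
        gcongr
        exact norm_natCast_le_one R _
    _ = 1 := by norm_num

end IsUltrametricDist

theorem norm_one_add_b_of_norm_one_add_b_pow_p_general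
    {p : ℕ} (hp : p.Prime)
    {K : Type*} [NormedField K] [IsUltrametricDist K]
    (hnorm : ‖(p : K)‖ = (p : ℝ)⁻¹)
    (b : K) (hb : ‖b‖ = 1)
    (hbp : ‖1 + b ^ p‖ = (p : ℝ) ^ (-(1 : ℝ) + 1 / (p : ℝ))) :
    ‖1 + b‖ = (p : ℝ) ^ (-(((p : ℝ) - 1) / (p : ℝ) ^ 2)) := by
  have hp1 : (1 : ℝ) < p := by exact_mod_cast hp.one_lt
  have hclose : ‖(1 + b) ^ p - (1 + b ^ p)‖ < ‖1 + b ^ p‖ :=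
    calc ‖(1 + b) ^ p - (1 + b ^ p)‖ ≤ ‖(p : K)‖ := by
          simpa using IsUltrametricDist.norm_add_pow_prime_sub_le hp norm_one.le hb.le
      _ = (p : ℝ) ^ (-1 : ℝ) := by rw [hnorm, Real.rpow_neg_one]
      _ < ‖1 + b ^ p‖ := by
          rw [hbp, Real.rpow_lt_rpow_left_iff hp1]
          have : 0 < 1 / (p : ℝ) := by positivity
          linarith
  have hpow : ‖1 + b‖ ^ p = (p : ℝ) ^ (-(1 : ℝ) + 1 / (p : ℝ)) := by
    rw [← norm_pow, IsUltrametricDist.norm_eq_of_norm_sub_lt_right hclose, hbp]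
  calc ‖1 + b‖ = (‖1 + b‖ ^ p) ^ ((p : ℝ)⁻¹) :=
        (Real.pow_rpow_inv_natCast (norm_nonneg _) hp.ne_zero).symm
    _ = (p : ℝ) ^ ((-(1 : ℝ) + 1 / (p : ℝ)) * (p : ℝ)⁻¹) := by
        rw [hpow, ← Real.rpow_mul (by positivity)]
    _ = (p : ℝ) ^ (-(((p : ℝ) - 1) / (p : ℝ) ^ 2)) := by
        congr 1
        field_simp
        ring

theorem norm_one_add_b_of_norm_one_add_b_pow_p
    {p : ℕ} (hp : p.Prime) (hodd : Odd p)
    {K : Type*} [NormedField K] [CompleteSpace K] [IsAlgClosed K] [IsUltrametricDist K]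
    [CharZero K]
    (hnorm : ‖(p : K)‖ = (p : ℝ)⁻¹)
    (b : K) (hb : ‖b‖ = 1)
    (hbp : ‖1 + b ^ p‖ = (p : ℝ) ^ (-(1 : ℝ) + 1 / (p : ℝ))) :
    ‖1 + b‖ = (p : ℝ) ^ (-(((p : ℝ) - 1) / (p : ℝ) ^ 2)) :=
  norm_one_add_b_of_norm_one_add_b_pow_p_general hp hnorm b hb hbp
end
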